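/- Suppose S₀(y) > 0 for every y ≥ x₀ and let σ : ℝ → ℝ be continuous. Then for every point x* with x₀ < x* < x(T), one has lim_{ν → 0⁺} (1/(2ν)) ∫_0^T 1{ |x(t) − x*| ≤ ν } · σ(x(t))² dt = σ(x*)² / S₀(x*). (This is the deterministic limit of the normalized local time Λ_T(x)/ε² established in the paper.) -/

import Mathlib

open Set Filter Topology MeasureTheory

/-!
A solution of `x' = S₀(x)` can never come back down to its initial value `x₀`, since its velocity
there is `S₀(x₀) > 0`; so `x` stays in `[x₀, ∞)`, where `S₀ > 0`, and is increasing. The change of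
variables `y = x(t)`, `dy = S₀(x(t)) dt` then turns the occupation integral into
`∫_{x*-ν}^{x*+ν} σ(y)² / S₀(y) dy`, and the first fundamental theorem of calculus gives the limit
of its average.
-/

theorem le_of_hasDerivWithinAt_autonomous {S x : ℝ → ℝ} {a b : ℝ}
    (hx : ∀ t ∈ Icc a b, HasDerivWithinAt x (S (x t)) (Icc a b) t) (hS : 0 < S (x a)) :
    ∀ t ∈ Icc a b, x a ≤ x t := by
  have hx' : ∀ t ∈ Ico a b, HasDerivWithinAt x (S (x t)) (Ici t) t := fun t ht =>
    (hx t (Ico_subset_Icc_self ht)).mono_of_mem_nhdsWithin (Icc_mem_nhdsGE_of_mem ht)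
  exact image_le_of_deriv_right_lt_deriv_boundary' continuousOn_const
    (fun t _ => hasDerivWithinAt_const t _ (x a)) le_rfl
    (fun t ht => (hx t ht).continuousWithinAt) hx' (fun t _ hxt => hxt ▸ hS)

theorem intervalIntegral_indicator_comp_eq_setIntegral_div {S x φ : ℝ → ℝ} {a b : ℝ}
    {s : Set ℝ} (hab : a ≤ b) (hx : ∀ t ∈ Icc a b, HasDerivWithinAt x (S (x t)) (Icc a b) t)
    (hS : ∀ t ∈ Icc a b, 0 < S (x t)) (hs : MeasurableSet s) (hsub : s ⊆ Icc (x a) (x b)) :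
    ∫ t in a..b, s.indicator φ (x t) = ∫ y in s, φ y / S y := by
  have hderiv : ∀ t ∈ Ioo a b, HasDerivAt x (S (x t)) t := fun t ht =>
    (hx t (Ioo_subset_Icc_self ht)).hasDerivAt (Icc_mem_nhds ht.1 ht.2)
  calc ∫ t in a..b, s.indicator φ (x t)
      = ∫ t in Icc a b, S (x t) • s.indicator (fun y => φ y / S y) (x t) := by
        rw [intervalIntegral.integral_of_le hab, ← integral_Icc_eq_integral_Ioc]
        refine setIntegral_congr_fun measurableSet_Icc fun t ht => ?_
        by_cases hxt : x t ∈ s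
        · simp [indicator_of_mem hxt, mul_div_cancel₀ _ (hS t ht).ne']
        · simp [indicator_of_notMem hxt]
    _ = ∫ y in Icc (x a) (x b), s.indicator (fun y => φ y / S y) y :=
        integral_Icc_deriv_smul_of_deriv_nonneg (fun t ht => (hx t ht).continuousWithinAt)
          hderiv (fun t ht => (hS t (Ioo_subset_Icc_self ht)).le) hab
    _ = ∫ y in s, φ y / S y := by rw [setIntegral_indicator hs, inter_eq_right.2 hsub]

theorem tendsto_intervalIntegral_symm_average {E : Type*} [NormedAddCommGroup E]
    [NormedSpace ℝ E] [CompleteSpace E] {f : ℝ → E} {c : ℝ}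
    (hfm : StronglyMeasurableAtFilter f (𝓝 c)) (hf : ContinuousAt f c) :
    Tendsto (fun ν : ℝ => (1 / (2 * ν)) • ∫ y in (c - ν)..(c + ν), f y) (𝓝[≠] 0) (𝓝 (f c)) := by
  have hu : Tendsto (fun ν : ℝ => c - ν) (𝓝[≠] 0) (𝓝 c) :=
    ((continuous_const.sub continuous_id).tendsto' 0 c (sub_zero c)).mono_left nhdsWithin_le_nhds
  have hv : Tendsto (fun ν : ℝ => c + ν) (𝓝[≠] 0) (𝓝 c) :=
    ((continuous_const.add continuous_id).tendsto' 0 c (add_zero c)).mono_left nhdsWithin_le_nhds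
  have hsmall := (intervalIntegral.integral_sub_linear_isLittleO_of_tendsto_ae hfm
    (hf.tendsto.mono_left inf_le_left) hu hv).tendsto_inv_smul_nhds_zero.add_const (f c)
  rw [zero_add] at hsmall
  refine hsmall.congr' (eventually_nhdsWithin_of_forall fun ν (hν : ν ≠ 0) => ?_)
  have h2ν : (c + ν) - (c - ν) = 2 * ν := by ring
  simp only [Pi.sub_apply, h2ν, smul_sub, smul_smul, one_div]
  rw [inv_mul_cancel₀ (mul_ne_zero two_ne_zero hν), one_smul, sub_add_cancel]

/-- Deterministic limit of the normalized local time: if `S₀(y) > 0` for all `y ≥ x₀` and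
`x₀ < x* < x(T)`, then
`(1/(2ν)) ∫_0^T 1{|x(t) − x*| ≤ ν} σ(x(t))² dt → σ(x*)²/S₀(x*)` as `ν → 0⁺`. -/
theorem stmt5 (T x₀ : ℝ) (hT : 0 < T) (S₀ σ x : ℝ → ℝ)
    (hS₀c : Continuous S₀) (hσc : Continuous σ)
    (hx0 : x 0 = x₀)
    (hx : ∀ t ∈ Icc (0:ℝ) T, HasDerivWithinAt x (S₀ (x t)) (Icc 0 T) t)
    (hpos : ∀ y, x₀ ≤ y → 0 < S₀ y)
    (xstar : ℝ) (h₁ : x₀ < xstar) (h₂ : xstar < x T) :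
    Filter.Tendsto
      (fun ν : ℝ => (1 / (2 * ν)) *
        ∫ t in (0:ℝ)..T, if |x t - xstar| ≤ ν then σ (x t) ^ 2 else 0)
      (nhdsWithin 0 (Ioi 0)) (nhds (σ xstar ^ 2 / S₀ xstar)) := by
  subst hx0
  have hS : ∀ t ∈ Icc 0 T, 0 < S₀ (x t) := fun t ht =>
    hpos _ (le_of_hasDerivWithinAt_autonomous hx (hpos _ le_rfl) t ht)
  have hlim := tendsto_intervalIntegral_symm_average (f := fun y => σ y ^ 2 / S₀ y) (c := xstar)
    ((hσc.measurable.pow_const 2).div hS₀c.measurable).stronglyMeasurable.stronglyMeasurableAtFilter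
    ((hσc.continuousAt.pow 2).div hS₀c.continuousAt (hpos _ h₁.le).ne')
  refine (hlim.mono_left (nhdsGT_le_nhdsNE 0)).congr' ?_
  filter_upwards [Ioo_mem_nhdsGT (lt_min (sub_pos.2 h₁) (sub_pos.2 h₂))] with ν ⟨hν, hνm⟩
  have hsub : Icc (xstar - ν) (xstar + ν) ⊆ Icc (x 0) (x T) := by
    rw [lt_min_iff] at hνm
    exact Icc_subset_Icc (by linarith) (by linarith)
  have hind : ∀ t, (if |x t - xstar| ≤ ν then σ (x t) ^ 2 else 0)
      = (Icc (xstar - ν) (xstar + ν)).indicator (fun y => σ y ^ 2) (x t) := fun t => by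
    rw [← Real.closedBall_eq_Icc]
    simp only [indicator, Metric.mem_closedBall, Real.dist_eq]
  simp only [hind, smul_eq_mul,
    intervalIntegral_indicator_comp_eq_setIntegral_div hT.le hx hS measurableSet_Icc hsub,
    intervalIntegral.integral_of_le (by linarith : xstar - ν ≤ xstar + ν),
    integral_Icc_eq_integral_Ioc]
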